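/- arXiv:1112.0791 — 2 statements merged into one kernel-verified Lean document; each statement's English description precedes it below -/
import Mathlib

section
/- For all ranked optimization problems P and Q (both interpreted as CO problems or both interpreted as ASO problems) and every rank interval [1,j], P ≡^{s,[1,j]} Q if and only if: (1) μ(P) = μ(Q); (2) (>^P)_{μ(P)} = (>^Q)_{μ(Q)}; and (3) for every I, J ∈ μ(P), either diff^P(I,J) = diff^Q(I,J), or both diff^P(I,J) > j and diff^Q(I,J) > j. -/
open scoped Classical

/-- Propositional formulas over a universe `U` of atoms, built from atoms,
`⊥`, conjunction, disjunction and implication. -/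
inductive Formula (U : Type) : Type where
  | atom : U → Formula U
  | bot  : Formula U
  | conj : Formula U → Formula U → Formula U
  | disj : Formula U → Formula U → Formula U
  | imp  : Formula U → Formula U → Formula U

variable {U : Type}

/-- Classical satisfaction `I ⊨ φ`. -/
def Sat (I : Set U) : Formula U → Prop
  | .atom a => a ∈ I
  | .bot => False
  | .conj φ ψ => Sat I φ ∧ Sat I ψ
  | .disj φ ψ => Sat I φ ∨ Sat I ψ
  | .imp φ ψ => Sat I φ → Sat I ψ

/-- Classical satisfaction of a theory. -/
def SatTheory (I : Set U) (T : Set (Formula U)) : Prop := ∀ φ ∈ T, Sat I φ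

/-- `Mod T`: the classical models of a theory `T`. -/
def models (T : Set (Formula U)) : Set (Set U) := {I | SatTheory I T}

/-- HT-satisfaction `⟨I, J⟩ ⊨_HT φ` (for `I ⊆ J`). -/
def SatHT (I J : Set U) : Formula U → Prop
  | .atom a => a ∈ I
  | .bot => False
  | .conj φ ψ => SatHT I J φ ∧ SatHT I J ψ
  | .disj φ ψ => SatHT I J φ ∨ SatHT I J ψ
  | .imp φ ψ => Sat J (Formula.imp φ ψ) ∧ (¬ SatHT I J φ ∨ SatHT I J ψ)

/-- HT-satisfaction of a theory. -/
def SatHTTheory (I J : Set U) (T : Set (Formula U)) : Prop := ∀ φ ∈ T, SatHT I J φ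

/-- `HT T`: the set of HT-models `⟨I,J⟩` (with `I ⊆ J`) of a theory `T`. -/
def HTmod (T : Set (Formula U)) : Set (Set U × Set U) :=
  {p | p.1 ⊆ p.2 ∧ SatHTTheory p.1 p.2 T}

/-- `AS T`: the equilibrium models (answer sets) of a theory `T`. -/
def AS (T : Set (Formula U)) : Set (Set U) :=
  {I | SatHTTheory I I T ∧ ∀ J : Set U, J ⊂ I → ¬ SatHTTheory J I T}

/-- A ranked preference rule `φ₁ > ⋯ > φₖ ←ʲ ψ` with nonempty head and rank `j ≥ 1`. -/
structure Rule (U : Type) : Type where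
  head : List (Formula U)
  body : Formula U
  rank : ℕ
  head_ne : head ≠ []
  rank_pos : 1 ≤ rank

/-- Satisfaction degree `v_I(r)`: the least (1-based) index of a satisfied head formula
if `I` satisfies the body and some head formula; `1` otherwise. -/
noncomputable def degree (I : Set U) (r : Rule U) : ℕ :=
  if Sat I r.body ∧ ∃ φ ∈ r.head, Sat I φ then
    sInf {n : ℕ | ∃ k : Fin r.head.length, n = k.1 + 1 ∧ Sat I (r.head.get k)}
  else 1

/-- The strict preference `I >^S J` induced by a selector `S`. -/
def gtSel (S : Set (Rule U)) (I J : Set U) : Prop :=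
  ∃ r' ∈ S, degree I r' < degree J r' ∧
    (∀ r ∈ S, r.rank = r'.rank → degree I r ≤ degree J r) ∧
    (∀ r ∈ S, r.rank < r'.rank → degree I r = degree J r)

/-- The indifference `I ≈^S J` induced by a selector `S`. -/
def simSel (S : Set (Rule U)) (I J : Set U) : Prop :=
  ∀ r ∈ S, degree I r = degree J r

/-- The preference `I ≥^S J` induced by a selector `S`. -/
def geSel (S : Set (Rule U)) (I J : Set U) : Prop :=
  simSel S I J ∨ gtSel S I J

/-- An optimization problem: a generator theory plus a finite selector. -/
structure OptProblem (U : Type) : Type where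
  gen : Set (Formula U)
  sel : Set (Rule U)
  sel_finite : sel.Finite

/-- Union of optimization problems. -/
def OptProblem.union (P Q : OptProblem U) : OptProblem U :=
  ⟨P.gen ∪ Q.gen, P.sel ∪ Q.sel, P.sel_finite.union Q.sel_finite⟩

/-- `P_{<i}`: the restriction of `P` to preference rules of rank `< i`. -/
def OptProblem.below (P : OptProblem U) (i : ℕ) : OptProblem U :=
  ⟨P.gen, {r ∈ P.sel | r.rank < i}, P.sel_finite.subset (Set.sep_subset _ _)⟩

/-- The two semantics for generators: classical (CO problems) and
equilibrium-model/answer-set (ASO problems). -/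
inductive Sem : Type where
  | co : Sem
  | aso : Sem

/-- `μ(P)`: the outcomes of `P` under the chosen semantics. -/
def outcomes (sem : Sem) (P : OptProblem U) : Set (Set U) :=
  match sem with
  | Sem.co => models P.gen
  | Sem.aso => AS P.gen

/-- `π(P)`: the preferred (optimal) outcomes of `P`. -/
def pref (sem : Sem) (P : OptProblem U) : Set (Set U) :=
  {I | I ∈ outcomes sem P ∧ ¬ ∃ J ∈ outcomes sem P, gtSel P.sel J I}

/-- `diff^P(I,J)`: the largest `k` with `I ≈^{P_{<k}} J` (`∞` if this holds for all `k`). -/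
noncomputable def diff (P : OptProblem U) (I J : Set U) : ℕ∞ :=
  if ∀ k : ℕ, simSel (P.below k).sel I J then ⊤
  else ((sSup {k : ℕ | simSel (P.below k).sel I J} : ℕ) : ℕ∞)

/-- Restriction `≻_V` of a relation on interpretations to a set `V` of interpretations. -/
def restrictRel (rel : Set U → Set U → Prop) (V : Set (Set U)) : Set U → Set U → Prop :=
  fun A B => rel A B ∧ A ∈ V ∧ B ∈ V

/-- All rules of `S` have rank in the interval `[i,j]` (`j` may be `∞`). -/
def inRankInterval (i : ℕ) (j : ℕ∞) (S : Set (Rule U)) : Prop :=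
  ∀ r ∈ S, i ≤ r.rank ∧ (r.rank : ℕ∞) ≤ j

/-- Strong sel-equivalence `P ≡^{s,[i,j]} Q`: same preferred outcomes under addition of any
context from `L^{s,[i,j]}` (empty generator, selector with ranks in `[i,j]`). -/
def seqv (sem : Sem) (i : ℕ) (j : ℕ∞) (P Q : OptProblem U) : Prop :=
  ∀ R : OptProblem U, R.gen = ∅ → inRankInterval i j R.sel →
    pref sem (P.union R) = pref sem (Q.union R)

/-- Strong gen-equivalence `P ≡_g Q`: same preferred outcomes under addition of any
generator context from `L^g` (empty selector). -/
def geqv (sem : Sem) (P Q : OptProblem U) : Prop :=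
  ∀ R : OptProblem U, R.sel = ∅ →
    pref sem (P.union R) = pref sem (Q.union R)

/-- Strong (combined) equivalence `P ≡^{s,[i,j]}_g Q`: same preferred outcomes under addition
of any context from `L^{[i,j]}` (arbitrary generator, selector with ranks in `[i,j]`). -/
def sgeqv (sem : Sem) (i : ℕ) (j : ℕ∞) (P Q : OptProblem U) : Prop :=
  ∀ R : OptProblem U, inRankInterval i j R.sel →
    pref sem (P.union R) = pref sem (Q.union R)

/-!
The forward direction works with contexts built from rules `χ > ⊤`, where `χ` is a formula
characterising an interpretation up to the finitely many formulas occurring in `P` and `Q`.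
Such a rule of rank one confines every competitor of an outcome to a few chosen classes, so
these contexts detect any difference in outcomes, in strict preference, and (by adding a second
rule at rank `m ≤ j`) in whether two outcomes are tied below rank `m + 1`.
Conversely, `J >^T I` is decided at the first rank where `J` and `I` differ; added rules of rank
at most `j` cannot make `P` and `Q` decide differently once their strict preferences agree and
their first distinguishing ranks agree up to `j + 1`.
-/

def Formula.top : Formula U := .imp .bot .bot

lemma sat_top (I : Set U) : Sat I Formula.top := id

lemma exists_formula_sat_iff (F : Finset (Formula U)) (X : Set U) :
    ∃ χ : Formula U, ∀ C, Sat C χ ↔ ∀ φ ∈ F, (Sat C φ ↔ Sat X φ) := by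
  induction F using Finset.induction_on with
  | empty => exact ⟨.top, fun C => by simp [sat_top]⟩
  | insert φ F _ ih =>
    obtain ⟨χ, hχ⟩ := ih
    refine ⟨.conj (if Sat X φ then φ else .imp φ .bot) χ, fun C => ?_⟩
    by_cases hX : Sat X φ <;> simp [Sat, hX, hχ]

lemma degree_congr {C X : Set U} {r : Rule U}
    (h : ∀ φ ∈ r.body :: r.head, (Sat C φ ↔ Sat X φ)) : degree C r = degree X r := by
  have hhead : ∀ φ ∈ r.head, (Sat C φ ↔ Sat X φ) := fun φ hφ => h φ (List.mem_cons_of_mem _ hφ)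
  have hget : ∀ k : Fin r.head.length, Sat C (r.head.get k) ↔ Sat X (r.head.get k) :=
    fun k => hhead _ (List.get_mem _ _)
  simp only [degree, h r.body List.mem_cons_self, hget]
  congr 2
  exact propext (exists_congr fun φ => and_congr_right fun hφ => hhead φ hφ)

lemma exists_formula_simSel {S : Set (Rule U)} (hS : S.Finite) (X : Set U) :
    ∃ χ : Formula U, Sat X χ ∧ ∀ C, Sat C χ → simSel S C X := by
  have hF : (⋃ r ∈ S, {φ | φ ∈ r.body :: r.head}).Finite :=
    hS.biUnion fun r _ => (r.body :: r.head).finite_toSet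
  obtain ⟨χ, hχ⟩ := exists_formula_sat_iff hF.toFinset X
  refine ⟨χ, (hχ X).2 fun _ _ => Iff.rfl, fun C hC r hr => degree_congr fun φ hφ => ?_⟩
  exact (hχ C).1 hC φ (by simp only [Set.Finite.mem_toFinset, Set.mem_iUnion]; exact ⟨r, hr, hφ⟩)

def Rule.ofFormula (φ : Formula U) (m : ℕ) (hm : 1 ≤ m) : Rule U :=
  ⟨[φ, .top], .top, m, by simp, hm⟩

lemma degree_ofFormula (I : Set U) (φ : Formula U) (m : ℕ) (hm : 1 ≤ m) :
    degree I (Rule.ofFormula φ m hm) = if Sat I φ then 1 else 2 := by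
  have hset : {n : ℕ | ∃ k : Fin 2, n = k.1 + 1 ∧ Sat I ([φ, .top].get k)} =
      {n | n = 1 ∧ Sat I φ ∨ n = 2} := by
    ext n
    simp [Fin.exists_fin_two, sat_top]
  have hc : Sat I (Rule.ofFormula φ m hm).body ∧ ∃ ψ ∈ (Rule.ofFormula φ m hm).head, Sat I ψ :=
    ⟨sat_top I, .top, by simp [Rule.ofFormula], sat_top I⟩
  unfold degree
  rw [if_pos hc]
  change sInf {n : ℕ | ∃ k : Fin 2, n = k.1 + 1 ∧ Sat I ([φ, .top].get k)} = _
  rw [hset]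
  split_ifs with h
  · refine le_antisymm (Nat.sInf_le (Or.inl ⟨rfl, h⟩)) (le_csInf ⟨2, Or.inr rfl⟩ ?_)
    rintro n (⟨rfl, -⟩ | rfl) <;> omega
  · simp [h]

section Preference

variable {S T : Set (Rule U)} {I J C : Set U}

lemma simSel_union : simSel (S ∪ T) I J ↔ simSel S I J ∧ simSel T I J := by
  simp only [simSel, Set.mem_union, or_imp, forall_and]

lemma simSel_singleton_ofFormula {φ : Formula U} {m : ℕ} {hm : 1 ≤ m} :
    simSel {Rule.ofFormula φ m hm} I J ↔ (Sat I φ ↔ Sat J φ) := by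
  simp only [simSel, Set.mem_singleton_iff, forall_eq, degree_ofFormula]
  by_cases hI : Sat I φ <;> by_cases hJ : Sat J φ <;> simp [hI, hJ]

lemma gtSel.not_simSel (h : gtSel S I J) : ¬ simSel S I J := by
  obtain ⟨w, hw, hlt, -⟩ := h
  exact fun hsim => hlt.ne (hsim w hw)

lemma gtSel.of_simSel_left (hCJ : simSel S C J) (h : gtSel S C I) : gtSel S J I := by
  obtain ⟨w, hw, hlt, hsame, hlow⟩ := h
  refine ⟨w, hw, hCJ w hw ▸ hlt, fun r hr hrk => ?_, fun r hr hrk => ?_⟩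
  · exact hCJ r hr ▸ hsame r hr hrk
  · exact hCJ r hr ▸ hlow r hr hrk

lemma gtSel_union_iff_of_simSel (hS : simSel S J I) : gtSel (T ∪ S) J I ↔ gtSel T J I := by
  constructor
  · rintro ⟨w, hw | hw, hlt, hsame, hlow⟩
    · exact ⟨w, hw, hlt, fun r hr => hsame r (.inl hr), fun r hr => hlow r (.inl hr)⟩
    · exact absurd (hS w hw) hlt.ne
  · rintro ⟨w, hw, hlt, hsame, hlow⟩
    refine ⟨w, .inl hw, hlt, ?_, ?_⟩
    · rintro r (hr | hr) hrk
      exacts [hsame r hr hrk, (hS r hr).le]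
    · rintro r (hr | hr) hrk
      exacts [hlow r hr hrk, hS r hr]

lemma gtSel.exists_rank_lt (h : gtSel T J I) {r : Rule U} (hr : r ∈ T)
    (hlt : degree I r < degree J r) : ∃ w ∈ T, w.rank < r.rank ∧ degree J w ≠ degree I w := by
  obtain ⟨w, hw, hwlt, hsame, hlow⟩ := h
  refine ⟨w, hw, lt_of_not_ge fun hle => ?_, hwlt.ne⟩
  rcases hle.eq_or_lt with heq | hgt
  · exact (hsame r hr heq).not_gt hlt
  · exact hlt.ne' (hlow r hr hgt)

lemma gtSel.sat_of_ofFormula_mem (h : gtSel T C I) {φ : Formula U}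
    (hr : Rule.ofFormula φ 1 le_rfl ∈ T) (hI : Sat I φ) : Sat C φ := by
  by_contra hC
  have hlt : degree I (Rule.ofFormula φ 1 le_rfl) < degree C (Rule.ofFormula φ 1 le_rfl) := by
    simp [degree_ofFormula, hI, hC]
  obtain ⟨w, -, hw, -⟩ := h.exists_rank_lt hr hlt
  exact absurd w.rank_pos (by simpa [Rule.ofFormula] using hw)

lemma gtSel_of_degree_lt {r : Rule U} (hr : r ∈ T) (hlt : degree J r < degree I r)
    (htie : ∀ r' ∈ T, r' ≠ r → r'.rank ≤ r.rank → degree J r' = degree I r') :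
    gtSel T J I := by
  refine ⟨r, hr, hlt, fun r' hr' hrk => ?_, fun r' hr' hrk => htie r' hr' ?_ hrk.le⟩
  · rcases eq_or_ne r' r with rfl | hne
    exacts [hlt.le, (htie r' hr' hne hrk.le).le]
  · rintro rfl
    exact hrk.false

end Preference

def AgreeBelow (T : Set (Rule U)) (I J : Set U) (m : ℕ) : Prop :=
  ∀ r ∈ T, r.rank < m → degree I r = degree J r

section AgreeBelow

variable {S T : Set (Rule U)} {I J : Set U} {m n : ℕ}

lemma AgreeBelow.symm (h : AgreeBelow T I J m) : AgreeBelow T J I m :=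
  fun r hr hrk => (h r hr hrk).symm

lemma AgreeBelow.mono (h : AgreeBelow T I J n) (hmn : m ≤ n) : AgreeBelow T I J m :=
  fun r hr hrk => h r hr (hrk.trans_le hmn)

lemma agreeBelow_zero : AgreeBelow T I J 0 := fun _ _ hrk => absurd hrk (Nat.not_lt_zero _)

lemma agreeBelow_union : AgreeBelow (S ∪ T) I J m ↔ AgreeBelow S I J m ∧ AgreeBelow T I J m := by
  simp only [AgreeBelow, Set.mem_union, or_imp, forall_and]

lemma AgreeBelow.eq_of_not_succ (hm : AgreeBelow T I J m) (hm' : ¬ AgreeBelow T I J (m + 1))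
    (hn : AgreeBelow T I J n) (hn' : ¬ AgreeBelow T I J (n + 1)) : m = n :=
  le_antisymm (not_lt.1 fun h => hn' (hm.mono h)) (not_lt.1 fun h => hm' (hn.mono h))

lemma not_gtSel_of_agreeBelow {r : Rule U} (hAB : AgreeBelow T J I r.rank) (hr : r ∈ T)
    (hlt : degree I r < degree J r) : ¬ gtSel T J I := fun h => by
  obtain ⟨w, hw, hwr, hne⟩ := h.exists_rank_lt hr hlt
  exact hne (hAB w hw hwr)

lemma gtSel_iff_exists_level : gtSel T J I ↔ ∃ m : ℕ, AgreeBelow T J I m ∧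
    ¬ AgreeBelow T J I (m + 1) ∧ ∀ r ∈ T, r.rank = m → degree J r ≤ degree I r := by
  constructor
  · rintro ⟨w, hw, hlt, hsame, hlow⟩
    exact ⟨w.rank, hlow, fun h => hlt.ne (h w hw w.rank.lt_succ_self), hsame⟩
  · rintro ⟨m, hm, hm', hdom⟩
    obtain ⟨r, hr, hrk, hne⟩ : ∃ r ∈ T, r.rank < m + 1 ∧ degree J r ≠ degree I r := by
      simpa [AgreeBelow] using hm'
    have hrm : r.rank = m := by
      by_contra h
      exact hne (hm r hr (by omega))
    refine ⟨r, hr, (hdom r hr hrm).lt_of_ne hne, fun r' hr' h => hdom r' hr' (h.trans hrm),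
      fun r' hr' h => hm r' hr' (hrm ▸ h)⟩

end AgreeBelow

lemma le_diff_iff (P : OptProblem U) (I J : Set U) (m : ℕ) :
    (m : ℕ∞) ≤ diff P I J ↔ AgreeBelow P.sel I J m := by
  have hbelow : ∀ k, simSel (P.below k).sel I J ↔ AgreeBelow P.sel I J k :=
    fun k => ⟨fun h r hr hrk => h r ⟨hr, hrk⟩, fun h r hr => h r hr.1 hr.2⟩
  simp only [diff, hbelow]
  split_ifs with hall
  · exact iff_of_true le_top (hall m)
  · obtain ⟨k, hk⟩ := not_forall.1 hall
    have hbdd : BddAbove {k | AgreeBelow P.sel I J k} :=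
      ⟨k, fun n hn => not_lt.1 fun h => hk (hn.mono h.le)⟩
    have hmem := Nat.sSup_mem ⟨0, agreeBelow_zero⟩ hbdd
    rw [Nat.cast_le]
    exact ⟨fun h => AgreeBelow.mono hmem h, fun h => le_csSup hbdd h⟩

lemma ENat.eq_of_le_of_forall_natCast_le_iff {a b j : ℕ∞}
    (h : ∀ k : ℕ, (k : ℕ∞) ≤ j + 1 → ((k : ℕ∞) ≤ a ↔ (k : ℕ∞) ≤ b)) (ha : a ≤ j) : a = b := by
  induction a using ENat.recTopCoe with
  | top =>
    have hj : j + 1 = ⊤ := by simp [top_le_iff.1 ha]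
    exact (ENat.eq_top_iff_forall_ge.2 fun k => (h k (hj ▸ le_top)).1 le_top).symm
  | coe m =>
    have hm : (m : ℕ∞) ≤ b := (h m (ha.trans le_self_add)).1 le_rfl
    have hbm : b < ((m + 1 : ℕ) : ℕ∞) := not_le.1 fun hb =>
      absurd ((h (m + 1) (by push_cast; gcongr)).2 hb) (by norm_cast; omega)
    push_cast at hbm
    exact le_antisymm hm ((ENat.lt_add_one_iff (ENat.natCast_ne_top m)).1 hbm)

lemma ENat.eq_or_lt_and_lt_iff (a b j : ℕ∞) : a = b ∨ (j < a ∧ j < b) ↔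
    ∀ k : ℕ, (k : ℕ∞) ≤ j + 1 → ((k : ℕ∞) ≤ a ↔ (k : ℕ∞) ≤ b) := by
  constructor
  · rintro (rfl | ⟨ha, hb⟩) k hk
    · exact Iff.rfl
    · exact iff_of_true (hk.trans (Order.add_one_le_of_lt ha))
        (hk.trans (Order.add_one_le_of_lt hb))
  · intro h
    by_cases ha : a ≤ j
    · exact .inl (ENat.eq_of_le_of_forall_natCast_le_iff h ha)
    by_cases hb : b ≤ j
    · exact .inl (ENat.eq_of_le_of_forall_natCast_le_iff (fun k hk => (h k hk).symm) hb).symm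
    · exact .inr ⟨not_le.1 ha, not_le.1 hb⟩

def optimal (V : Set (Set U)) (S : Set (Rule U)) : Set (Set U) :=
  {I | I ∈ V ∧ ¬ ∃ J ∈ V, gtSel S J I}

lemma exists_gtSel_of_notMem_optimal {V : Set (Set U)} {S : Set (Rule U)} {I : Set U}
    (hI : I ∈ V) (h : I ∉ optimal V S) : ∃ J ∈ V, gtSel S J I := by
  simpa [optimal, hI] using h

lemma optimal_congr {V : Set (Set U)} {S T : Set (Rule U)}
    (h : ∀ I ∈ V, ∀ J ∈ V, gtSel S J I ↔ gtSel T J I) : optimal V S = optimal V T := by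
  ext I
  simp only [optimal, Set.mem_ofPred_eq, and_congr_right_iff]
  intro hI
  exact not_congr (exists_congr fun J => and_congr_right fun hJ => h I hI J hJ)

/-- `≡^{s,[1,j]}` with the outcome sets `V`, `W` made explicit. -/
def SelEquiv (j : ℕ∞) (V : Set (Set U)) (T₁ : Set (Rule U)) (W : Set (Set U))
    (T₂ : Set (Rule U)) : Prop :=
  ∀ S : Set (Rule U), S.Finite → (∀ r ∈ S, (r.rank : ℕ∞) ≤ j) →
    optimal V (T₁ ∪ S) = optimal W (T₂ ∪ S)

namespace SelEquiv

variable {j : ℕ∞} {V W : Set (Set U)} {T₁ T₂ : Set (Rule U)}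

lemma symm (h : SelEquiv j V T₁ W T₂) : SelEquiv j W T₂ V T₁ :=
  fun S hS hSj => (h S hS hSj).symm

lemma subset (h : SelEquiv j V T₁ W T₂) (hj : 1 ≤ j) (hT₁ : T₁.Finite) : V ⊆ W := by
  intro I hI
  obtain ⟨χ, hIχ, hχ⟩ := exists_formula_simSel hT₁ I
  let r := Rule.ofFormula χ 1 le_rfl
  have hopt : I ∈ optimal V (T₁ ∪ {r}) := by
    refine ⟨hI, fun ⟨C, _, hCI⟩ => hCI.not_simSel ?_⟩
    have hCχ : Sat C χ := hCI.sat_of_ofFormula_mem (.inr rfl) hIχ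
    exact simSel_union.2 ⟨hχ C hCχ, simSel_singleton_ofFormula.2 (iff_of_true hCχ hIχ)⟩
  rw [h {r} (Set.toFinite _) (by simpa [r, Rule.ofFormula] using hj)] at hopt
  exact hopt.1

lemma gtSel_of_gtSel (h : SelEquiv j V T₁ W T₂) (hj : 1 ≤ j) (hT₂ : T₂.Finite) {A B : Set U}
    (hA : A ∈ W) (hB : B ∈ V) (hBA : gtSel T₁ B A) : gtSel T₂ B A := by
  obtain ⟨χA, hAχA, hχA⟩ := exists_formula_simSel hT₂ A
  obtain ⟨χB, hBχB, hχB⟩ := exists_formula_simSel hT₂ B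
  let r := Rule.ofFormula (χA.disj χB) 1 le_rfl
  have hBA_r : simSel {r} B A := simSel_singleton_ofFormula.2 (iff_of_true (.inr hBχB) (.inl hAχA))
  have hA_opt : A ∉ optimal V (T₁ ∪ {r}) :=
    fun hA' => hA'.2 ⟨B, hB, (gtSel_union_iff_of_simSel hBA_r).2 hBA⟩
  rw [h {r} (Set.toFinite _) (by simpa [r, Rule.ofFormula] using hj)] at hA_opt
  obtain ⟨C, -, hCA⟩ := exists_gtSel_of_notMem_optimal hA hA_opt
  rcases hCA.sat_of_ofFormula_mem (.inr rfl) (.inl hAχA) with hCχA | hCχB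
  · exact (hCA.not_simSel (simSel_union.2 ⟨hχA C hCχA,
      simSel_singleton_ofFormula.2 (iff_of_true (Or.inl hCχA) (Or.inl hAχA))⟩)).elim
  · have hCB : simSel (T₂ ∪ {r}) C B := simSel_union.2 ⟨hχB C hCχB,
      simSel_singleton_ofFormula.2 (iff_of_true (Or.inr hCχB) (Or.inr hBχB))⟩
    exact (gtSel_union_iff_of_simSel hBA_r).1 (hCA.of_simSel_left hCB)

/-- If `I` were strictly better than `J` on `r`, the context
`{χ_I ∨ χ_J > ⊤ ←¹, χ_J > ⊤ ←^{rank r}}` would make `J` beat `I` under `T₂` but not under `T₁`: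
the rank-one rule confines any competitor of `I` to the classes of `I` and `J`, and neither
class beats `I` under `T₁`. -/
lemma degree_le_of_agreeBelow (h : SelEquiv j V T₁ W T₂) (hj : 1 ≤ j) (hT₁ : T₁.Finite)
    (hVW : V ⊆ W) {I J : Set U} (hI : I ∈ V) (hJ : J ∈ V) {r : Rule U} (hr : r ∈ T₁)
    (hrj : (r.rank : ℕ∞) ≤ j) (hAB₁ : AgreeBelow T₁ I J r.rank)
    (hAB₂ : AgreeBelow T₂ I J (r.rank + 1)) : degree J r ≤ degree I r := by
  obtain ⟨χI, hIχI, hχI⟩ := exists_formula_simSel hT₁ I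
  obtain ⟨χJ, hJχJ, hχJ⟩ := exists_formula_simSel hT₁ J
  by_contra! hlt
  have hIχJ : ¬ Sat I χJ := fun h => hlt.ne (hχJ I h r hr)
  let rS := Rule.ofFormula (χI.disj χJ) 1 le_rfl
  let rM := Rule.ofFormula χJ r.rank r.rank_pos
  have hSJI : simSel {rS} J I :=
    simSel_singleton_ofFormula.2 (iff_of_true (Or.inr hJχJ) (Or.inl hIχI))
  have hJI : gtSel (T₂ ∪ ({rS} ∪ {rM})) J I := by
    refine gtSel_of_degree_lt (r := rM) (.inr (.inr rfl))
      (by simp [rM, degree_ofFormula, hJχJ, hIχJ]) ?_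
    rintro r' (hr' | rfl | rfl) hne hrk
    · exact (hAB₂ r' hr' (Nat.lt_succ_of_le hrk)).symm
    · exact hSJI _ rfl
    · exact absurd rfl hne
  have hI_opt : I ∉ optimal W (T₂ ∪ ({rS} ∪ {rM})) := fun hI' => hI'.2 ⟨J, hVW hJ, hJI⟩
  have hRj : ∀ r' ∈ ({rS} ∪ {rM} : Set (Rule U)), (r'.rank : ℕ∞) ≤ j := by
    rintro _ (rfl | rfl)
    exacts [by simpa [rS, Rule.ofFormula] using hj, hrj]
  rw [← h _ (Set.toFinite _) hRj] at hI_opt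
  obtain ⟨C, -, hCI⟩ := exists_gtSel_of_notMem_optimal hI hI_opt
  rcases hCI.sat_of_ofFormula_mem (.inr (.inl rfl)) (.inl hIχI) with hCχI | hCχJ
  · have hCχJ : ¬ Sat C χJ := fun h => hlt.ne ((hχI C hCχI r hr).symm.trans (hχJ C h r hr))
    exact hCI.not_simSel (simSel_union.2 ⟨hχI C hCχI, simSel_union.2
      ⟨simSel_singleton_ofFormula.2 (iff_of_true (Or.inl hCχI) (Or.inl hIχI)),
        simSel_singleton_ofFormula.2 (iff_of_false hCχJ hIχJ)⟩⟩)
  · have hCJ : simSel (T₁ ∪ ({rS} ∪ {rM})) C J := simSel_union.2 ⟨hχJ C hCχJ, simSel_union.2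
      ⟨simSel_singleton_ofFormula.2 (iff_of_true (Or.inr hCχJ) (Or.inr hJχJ)),
        simSel_singleton_ofFormula.2 (iff_of_true hCχJ hJχJ)⟩⟩
    refine not_gtSel_of_agreeBelow ?_ (.inl hr) hlt (hCI.of_simSel_left hCJ)
    rintro r' (hr' | rfl | rfl) hrk
    · exact (hAB₁ r' hr' hrk).symm
    · exact hSJI _ rfl
    · exact absurd hrk (lt_irrefl _)

lemma agreeBelow_succ (h : SelEquiv j V T₁ W T₂) (hj : 1 ≤ j) (hT₁ : T₁.Finite) (hVW : V ⊆ W)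
    {I J : Set U} (hI : I ∈ V) (hJ : J ∈ V) {k : ℕ} (hk : (k : ℕ∞) ≤ j)
    (h₁ : AgreeBelow T₁ I J k) (h₂ : AgreeBelow T₂ I J (k + 1)) : AgreeBelow T₁ I J (k + 1) := by
  intro r hr hrk
  rcases (Nat.lt_succ_iff.1 hrk).lt_or_eq with hrk | rfl
  · exact h₁ r hr hrk
  · exact le_antisymm
      (h.degree_le_of_agreeBelow hj hT₁ hVW hJ hI hr hk h₁.symm h₂.symm)
      (h.degree_le_of_agreeBelow hj hT₁ hVW hI hJ hr hk h₁ h₂)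

lemma agreeBelow_iff (h : SelEquiv j V T₁ W T₂) (hj : 1 ≤ j) (hT₁ : T₁.Finite)
    (hT₂ : T₂.Finite) (hVW : V = W) {I J : Set U} (hI : I ∈ V) (hJ : J ∈ V) {k : ℕ}
    (hk : (k : ℕ∞) ≤ j + 1) : AgreeBelow T₁ I J k ↔ AgreeBelow T₂ I J k := by
  induction k with
  | zero => exact iff_of_true agreeBelow_zero agreeBelow_zero
  | succ k ih =>
    have hkj : (k : ℕ∞) ≤ j := by
      push_cast at hk
      exact (ENat.add_le_add_iff_right ENat.one_ne_top).1 hk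
    have ih := ih (hkj.trans le_self_add)
    subst hVW
    exact ⟨fun h₁ => h.symm.agreeBelow_succ hj hT₂ le_rfl hI hJ hkj (ih.1 (h₁.mono k.le_succ)) h₁,
      fun h₂ => h.agreeBelow_succ hj hT₁ le_rfl hI hJ hkj (ih.2 (h₂.mono k.le_succ)) h₂⟩

end SelEquiv

lemma gtSel_union_of_agreeBelow_iff {T₁ T₂ S : Set (Rule U)} {I J : Set U} {j : ℕ∞}
    (hS : ∀ r ∈ S, (r.rank : ℕ∞) ≤ j) (hgt : gtSel T₁ J I ↔ gtSel T₂ J I)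
    (hAB : ∀ k : ℕ, (k : ℕ∞) ≤ j + 1 → (AgreeBelow T₁ J I k ↔ AgreeBelow T₂ J I k))
    (h : gtSel (T₁ ∪ S) J I) : gtSel (T₂ ∪ S) J I := by
  obtain ⟨m, hm, hm', hdom⟩ := gtSel_iff_exists_level.1 h
  rw [agreeBelow_union] at hm hm'
  simp only [Set.mem_union, or_imp, forall_and] at hdom
  by_cases hmj : (m : ℕ∞) ≤ j
  · have h₂m := (hAB m (hmj.trans le_self_add)).1 hm.1
    have hAB' := hAB (m + 1) (by push_cast; gcongr)
    refine gtSel_iff_exists_level.2 ⟨m, agreeBelow_union.2 ⟨h₂m, hm.2⟩, ?_⟩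
    simp only [agreeBelow_union, Set.mem_union, or_imp, forall_and]
    by_cases h₁ : AgreeBelow T₁ J I (m + 1)
    · exact ⟨fun h' => hm' ⟨h₁, h'.2⟩,
        fun r hr hrk => (hAB'.1 h₁ r hr (hrk ▸ m.lt_succ_self)).le, hdom.2⟩
    · have h₂ : ¬ AgreeBelow T₂ J I (m + 1) := mt hAB'.2 h₁
      obtain ⟨m', hm₂, hm₂', hdom₂⟩ :=
        gtSel_iff_exists_level.1 (hgt.1 (gtSel_iff_exists_level.2 ⟨m, hm.1, h₁, hdom.1⟩))
      obtain rfl := h₂m.eq_of_not_succ h₂ hm₂ hm₂'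
      exact ⟨fun h' => h₂ h'.1, hdom₂, hdom.2⟩
  · have hS' : simSel S J I := fun r hr =>
      hm.2 r hr (by exact_mod_cast (hS r hr).trans_lt (not_le.1 hmj))
    rw [gtSel_union_iff_of_simSel hS'] at h ⊢
    exact hgt.1 h

theorem selEquiv_iff {j : ℕ∞} (hj : 1 ≤ j) {V W : Set (Set U)} {T₁ T₂ : Set (Rule U)}
    (hT₁ : T₁.Finite) (hT₂ : T₂.Finite) :
    SelEquiv j V T₁ W T₂ ↔ V = W ∧ (∀ A ∈ V, ∀ B ∈ V, gtSel T₁ A B ↔ gtSel T₂ A B) ∧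
      ∀ I ∈ V, ∀ J ∈ V, ∀ k : ℕ, (k : ℕ∞) ≤ j + 1 →
        (AgreeBelow T₁ I J k ↔ AgreeBelow T₂ I J k) := by
  constructor
  · intro h
    have hVW : V = W := (h.subset hj hT₁).antisymm (h.symm.subset hj hT₂)
    refine ⟨hVW, fun A hA B hB => ⟨h.gtSel_of_gtSel hj hT₂ (hVW ▸ hB) hA,
      h.symm.gtSel_of_gtSel hj hT₁ hB (hVW ▸ hA)⟩,
      fun I hI J hJ k hk => h.agreeBelow_iff hj hT₁ hT₂ hVW hI hJ hk⟩
  · rintro ⟨rfl, hgt, hAB⟩ S - hS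
    exact optimal_congr fun I hI J hJ =>
      ⟨gtSel_union_of_agreeBelow_iff hS (hgt J hJ I hI) (hAB J hJ I hI),
        gtSel_union_of_agreeBelow_iff hS (hgt J hJ I hI).symm fun k hk => (hAB J hJ I hI k hk).symm⟩

lemma pref_union_of_gen_eq_empty (sem : Sem) (P : OptProblem U) {R : OptProblem U}
    (hR : R.gen = ∅) : pref sem (P.union R) = optimal (outcomes sem P) (P.sel ∪ R.sel) := by
  have hout : outcomes sem (P.union R) = outcomes sem P := by
    cases sem <;> simp [outcomes, OptProblem.union, hR]
  simp only [pref, optimal, hout]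
  rfl

lemma seqv_one_iff_selEquiv (sem : Sem) (j : ℕ∞) (P Q : OptProblem U) :
    seqv sem 1 j P Q ↔ SelEquiv j (outcomes sem P) P.sel (outcomes sem Q) Q.sel := by
  constructor
  · intro h S hS hSj
    have := h ⟨∅, S, hS⟩ rfl fun r hr => ⟨r.rank_pos, hSj r hr⟩
    rwa [pref_union_of_gen_eq_empty sem P rfl, pref_union_of_gen_eq_empty sem Q rfl] at this
  · intro h R hR hRj
    rw [pref_union_of_gen_eq_empty sem P hR, pref_union_of_gen_eq_empty sem Q hR]
    exact h R.sel R.sel_finite fun r hr => (hRj r hr).2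

lemma restrictRel_eq_iff {rel₁ rel₂ : Set U → Set U → Prop} {V : Set (Set U)} :
    restrictRel rel₁ V = restrictRel rel₂ V ↔ ∀ A ∈ V, ∀ B ∈ V, (rel₁ A B ↔ rel₂ A B) := by
  simp only [funext_iff, restrictRel, eq_iff_iff]
  exact ⟨fun h A hA B hB => by simpa [hA, hB] using h A B,
    fun h A B => ⟨fun ⟨hr, hA, hB⟩ => ⟨(h A hA B hB).1 hr, hA, hB⟩,
      fun ⟨hr, hA, hB⟩ => ⟨(h A hA B hB).2 hr, hA, hB⟩⟩⟩

theorem stmt2_general {U : Type} (sem : Sem) (P Q : OptProblem U)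
    (j : ℕ∞) (hj : (1 : ℕ∞) ≤ j) :
    seqv sem 1 j P Q ↔
      (outcomes sem P = outcomes sem Q ∧
       restrictRel (gtSel P.sel) (outcomes sem P) =
         restrictRel (gtSel Q.sel) (outcomes sem Q) ∧
       (∀ I ∈ outcomes sem P, ∀ J ∈ outcomes sem P,
         diff P I J = diff Q I J ∨ (j < diff P I J ∧ j < diff Q I J))) := by
  rw [seqv_one_iff_selEquiv, selEquiv_iff hj P.sel_finite Q.sel_finite]
  refine and_congr_right fun hPQ => and_congr ?_ ?_
  · rw [← hPQ, restrictRel_eq_iff]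
  · simp only [ENat.eq_or_lt_and_lt_iff, le_diff_iff]

/-- Corollary 3: characterization of `P ≡^{s,[1,j]} Q`. -/
theorem stmt2 {U : Type} [Countable U] (sem : Sem) (P Q : OptProblem U)
    (j : ℕ∞) (hj : (1 : ℕ∞) ≤ j) :
    seqv sem 1 j P Q ↔
      (outcomes sem P = outcomes sem Q ∧
       restrictRel (gtSel P.sel) (outcomes sem P) =
         restrictRel (gtSel Q.sel) (outcomes sem Q) ∧
       (∀ I ∈ outcomes sem P, ∀ J ∈ outcomes sem P,
         diff P I J = diff Q I J ∨ (j < diff P I J ∧ j < diff Q I J))) :=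
  stmt2_general sem P Q j hj
end

section
/- For all ASO problems P and Q, P ≡_g Q if and only if HT(P^g) = HT(Q^g) and (>^P)_{Mod(P^g)} = (>^Q)_{Mod(Q^g)}. -/
open scoped Classical

variable {U : Type}

section Stmt9Aux

variable {U : Type}

lemma satHT_sat {K M : Set U} (h : K ⊆ M) : ∀ φ : Formula U, SatHT K M φ → Sat M φ
  | .atom _, ha => h ha
  | .bot, hb => hb.elim
  | .conj φ ψ, ⟨h1, h2⟩ => ⟨satHT_sat h φ h1, satHT_sat h ψ h2⟩
  | .disj φ ψ, h1 =>
      h1.elim (fun x => Or.inl (satHT_sat h φ x)) (fun x => Or.inr (satHT_sat h ψ x))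
  | .imp _ _, h1 => h1.1

lemma satHT_self {I : Set U} : ∀ φ : Formula U, SatHT I I φ ↔ Sat I φ
  | .atom _ => Iff.rfl
  | .bot => Iff.rfl
  | .conj φ ψ => by simp only [SatHT, Sat, satHT_self φ, satHT_self ψ]
  | .disj φ ψ => by simp only [SatHT, Sat, satHT_self φ, satHT_self ψ]
  | .imp φ ψ => by
      simp only [SatHT, Sat, satHT_self φ, satHT_self ψ]
      tauto

lemma satHTTheory_self {I : Set U} {T : Set (Formula U)} :
    SatHTTheory I I T ↔ SatTheory I T :=
  forall₂_congr fun φ _ => satHT_self φ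

lemma satTheory_of_satHTTheory {K M : Set U} (h : K ⊆ M) {T : Set (Formula U)}
    (hT : SatHTTheory K M T) : SatTheory M T :=
  fun φ hφ => satHT_sat h φ (hT φ hφ)

lemma satHTTheory_union {K M : Set U} {T G : Set (Formula U)} :
    SatHTTheory K M (T ∪ G) ↔ SatHTTheory K M T ∧ SatHTTheory K M G :=
  ⟨fun h => ⟨fun φ hφ => h φ (Or.inl hφ), fun φ hφ => h φ (Or.inr hφ)⟩,
   fun h φ hφ => hφ.elim (h.1 φ) (h.2 φ)⟩

lemma mem_HTmod {T : Set (Formula U)} {K M : Set U} :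
    (K, M) ∈ HTmod T ↔ K ⊆ M ∧ SatHTTheory K M T := Iff.rfl

lemma satHTTheory_iff_of_HT {T1 T2 : Set (Formula U)} (h : HTmod T1 = HTmod T2)
    {K M : Set U} (hKM : K ⊆ M) : SatHTTheory K M T1 ↔ SatHTTheory K M T2 := by
  have := Set.ext_iff.mp h (K, M)
  simp only [mem_HTmod, hKM, true_and] at this
  exact this

lemma models_eq_of_HT {T1 T2 : Set (Formula U)} (h : HTmod T1 = HTmod T2) :
    models T1 = models T2 := by
  ext M
  constructor <;> intro hm
  · exact satHTTheory_self.mp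
      ((satHTTheory_iff_of_HT h (subset_refl M)).mp (satHTTheory_self.mpr hm))
  · exact satHTTheory_self.mp
      ((satHTTheory_iff_of_HT h (subset_refl M)).mpr (satHTTheory_self.mpr hm))

lemma AS_union_eq {T1 T2 : Set (Formula U)} (h : HTmod T1 = HTmod T2)
    (G : Set (Formula U)) : AS (T1 ∪ G) = AS (T2 ∪ G) := by
  ext I
  simp only [AS, Set.mem_setOf_eq, satHTTheory_union]
  rw [satHTTheory_iff_of_HT h (subset_refl I)]
  constructor <;> rintro ⟨h1, h2⟩ <;> refine ⟨h1, fun J hJ hc => h2 J hJ ⟨?_, hc.2⟩⟩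
  · exact (satHTTheory_iff_of_HT h hJ.subset).mpr hc.1
  · exact (satHTTheory_iff_of_HT h hJ.subset).mp hc.1

lemma gtSel_irrefl {S : Set (Rule U)} {A : Set U} : ¬ gtSel S A A := by
  rintro ⟨r, -, hr, -, -⟩
  exact lt_irrefl _ hr

lemma gtSel_asymm {S : Set (Rule U)} {A B : Set U} (h : gtSel S A B) : ¬ gtSel S B A := by
  rintro ⟨r₂, hr₂S, hlt₂, heq₂, hlo₂⟩
  obtain ⟨r₁, hr₁S, hlt₁, heq₁, hlo₁⟩ := h
  rcases lt_trichotomy r₁.rank r₂.rank with hr | hr | hr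
  · exact absurd (hlo₂ r₁ hr₁S hr) (ne_of_gt hlt₁)
  · exact absurd hlt₁ (not_lt.mpr (heq₂ r₁ hr₁S hr))
  · exact absurd (hlo₁ r₂ hr₂S hr) (ne_of_gt hlt₂)

/-- Generator-only context. -/
def ctx (G : Set (Formula U)) : OptProblem U := ⟨G, ∅, Set.finite_empty⟩

lemma pref_union_ctx (P : OptProblem U) (G : Set (Formula U)) :
    pref Sem.aso (P.union (ctx G)) =
      {I | I ∈ AS (P.gen ∪ G) ∧ ¬ ∃ J ∈ AS (P.gen ∪ G), gtSel P.sel J I} := by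
  have hsel : (P.union (ctx G)).sel = P.sel := Set.union_empty _
  ext I
  simp only [pref, outcomes, Set.mem_setOf_eq, hsel]
  rfl

/-- Context with HT-models exactly `⟨J,J⟩`. -/
def R1gen (J : Set U) : Set (Formula U) :=
  {φ | (∃ x ∈ J, φ = Formula.atom x) ∨
       (∃ x, x ∉ J ∧ φ = (Formula.atom x).imp Formula.bot)}

lemma R1_char {J K M : Set U} (hKM : K ⊆ M) :
    SatHTTheory K M (R1gen J) ↔ K = J ∧ M = J := by
  constructor
  · intro h
    have hJK : J ⊆ K := fun x hx => h (Formula.atom x) (Or.inl ⟨x, hx, rfl⟩)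
    have hMJ : M ⊆ J := by
      intro x hxM
      by_contra hxJ
      have := h ((Formula.atom x).imp Formula.bot) (Or.inr ⟨x, hxJ, rfl⟩)
      simp only [SatHT, Sat] at this
      exact this.1 hxM
    exact ⟨subset_antisymm (hKM.trans hMJ) hJK, subset_antisymm hMJ (hJK.trans hKM)⟩
  · rintro ⟨rfl, rfl⟩
    rintro φ (⟨x, hx, rfl⟩ | ⟨x, hx, rfl⟩)
    · exact hx
    · simp only [SatHT, Sat]
      tauto

/-- Context with HT-models exactly `⟨I,J⟩` and `⟨J,J⟩` (for `I ⊆ J`, `a ∈ J \ I`). -/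
def R2gen (I J : Set U) (a : U) : Set (Formula U) :=
  {φ | (∃ x ∈ I, φ = Formula.atom x) ∨
       (∃ x, x ∉ J ∧ φ = (Formula.atom x).imp Formula.bot) ∨
       (∃ x, (x ∈ J ∧ x ∉ I) ∧ ∃ y, (y ∈ J ∧ y ∉ I) ∧
          φ = (Formula.atom x).imp (Formula.atom y)) ∨
       φ = ((Formula.atom a).imp Formula.bot).imp Formula.bot}

lemma R2_char {I J : Set U} {a : U} (hIJ : I ⊆ J) (haJ : a ∈ J) (haI : a ∉ I)
    {K M : Set U} (hKM : K ⊆ M) :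
    SatHTTheory K M (R2gen I J a) ↔ (M = J ∧ (K = I ∨ K = J)) := by
  constructor
  · intro h
    have hIK : I ⊆ K := fun x hx => h (Formula.atom x) (Or.inl ⟨x, hx, rfl⟩)
    have hMJ : M ⊆ J := by
      intro x hxM
      by_contra hxJ
      have := h ((Formula.atom x).imp Formula.bot) (Or.inr (Or.inl ⟨x, hxJ, rfl⟩))
      simp only [SatHT, Sat] at this
      exact this.1 hxM
    have haM : a ∈ M := by
      have := h (((Formula.atom a).imp Formula.bot).imp Formula.bot)
        (Or.inr (Or.inr (Or.inr rfl)))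
      simp only [SatHT, Sat] at this
      tauto
    have himp : ∀ x, (x ∈ J ∧ x ∉ I) → ∀ y, (y ∈ J ∧ y ∉ I) →
        (x ∈ M → y ∈ M) ∧ (x ∉ K ∨ y ∈ K) := by
      intro x hx y hy
      have := h ((Formula.atom x).imp (Formula.atom y))
        (Or.inr (Or.inr (Or.inl ⟨x, hx, y, hy, rfl⟩)))
      simp only [SatHT, Sat] at this
      tauto
    have hJM : J ⊆ M := by
      intro x hx
      by_cases hxI : x ∈ I
      · exact hKM (hIK hxI)
      · exact (himp a ⟨haJ, haI⟩ x ⟨hx, hxI⟩).1 haM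
    have hMeq : M = J := subset_antisymm hMJ hJM
    refine ⟨hMeq, ?_⟩
    by_cases hx0 : ∃ x, x ∈ K ∧ x ∈ J ∧ x ∉ I
    · obtain ⟨x0, hx0K, hx0J⟩ := hx0
      right
      apply subset_antisymm (hKM.trans hMJ)
      intro y hy
      by_cases hyI : y ∈ I
      · exact hIK hyI
      · rcases (himp x0 hx0J y ⟨hy, hyI⟩).2 with hc | hc
        · exact absurd hx0K hc
        · exact hc
    · left
      push_neg at hx0
      apply subset_antisymm _ hIK
      intro x hx
      exact hx0 x hx (hMJ (hKM hx))
  · rintro ⟨rfl, hK⟩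
    rintro φ (⟨x, hx, rfl⟩ | ⟨x, hx, rfl⟩ | ⟨x, hx, y, hy, rfl⟩ | rfl)
    · rcases hK with rfl | rfl
      · exact hx
      · exact hIJ hx
    · rcases hK with rfl | rfl <;> simp only [SatHT, Sat] <;> tauto
    · rcases hK with rfl | rfl <;> simp only [SatHT, Sat]
      · exact ⟨fun _ => hy.1, Or.inl hx.2⟩
      · exact ⟨fun _ => hy.1, Or.inr hy.1⟩
    · rcases hK with rfl | rfl <;> simp only [SatHT, Sat] <;> tauto

/-- Context with HT-models exactly `⟨A,A⟩` and `⟨B,B⟩` (for `c ∈ A \ B`). -/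
def Ggen (A B : Set U) (c : U) : Set (Formula U) :=
  {φ | (∃ x : U, φ = (Formula.atom x).disj ((Formula.atom x).imp Formula.bot)) ∨
       (∃ x, (x ∉ A ∧ x ∉ B) ∧ φ = (Formula.atom x).imp Formula.bot) ∨
       (∃ x, (x ∈ A ∧ x ∈ B) ∧ φ = Formula.atom x) ∨
       (∃ x, (x ∈ A ∧ x ∉ B) ∧ φ = (Formula.atom x).imp (Formula.atom c)) ∨
       (∃ x ∈ A, φ = (Formula.atom c).imp (Formula.atom x)) ∨
       (∃ y, (y ∈ B ∧ y ∉ A) ∧ φ = (Formula.atom y).imp ((Formula.atom c).imp Formula.bot)) ∨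
       (∃ y ∈ B, φ = ((Formula.atom c).imp Formula.bot).imp (Formula.atom y))}

lemma G_char {A B : Set U} {c : U} (hcA : c ∈ A) (hcB : c ∉ B)
    {K M : Set U} (hKM : K ⊆ M) :
    SatHTTheory K M (Ggen A B c) ↔ (K = A ∧ M = A) ∨ (K = B ∧ M = B) := by
  constructor
  · intro h
    have hMK : M ⊆ K := by
      intro x hxM
      have := h ((Formula.atom x).disj ((Formula.atom x).imp Formula.bot))
        (Or.inl ⟨x, rfl⟩)
      simp only [SatHT, Sat] at this
      tauto
    have hKM' : K = M := subset_antisymm hKM hMK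
    subst hKM'
    have hS : SatTheory K (Ggen A B c) := satHTTheory_self.mp h
    have hMAB : ∀ x ∈ K, x ∈ A ∨ x ∈ B := by
      intro x hx
      by_contra hc
      push_neg at hc
      have := hS ((Formula.atom x).imp Formula.bot) (Or.inr (Or.inl ⟨x, hc, rfl⟩))
      simp only [Sat] at this
      exact this hx
    have hABM : ∀ x, x ∈ A → x ∈ B → x ∈ K := fun x h1 h2 =>
      hS (Formula.atom x) (Or.inr (Or.inr (Or.inl ⟨x, ⟨h1, h2⟩, rfl⟩)))
    have hAc : ∀ x ∈ A, c ∈ K → x ∈ K := by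
      intro x hx hc
      have := hS ((Formula.atom c).imp (Formula.atom x))
        (Or.inr (Or.inr (Or.inr (Or.inr (Or.inl ⟨x, hx, rfl⟩)))))
      simp only [Sat] at this
      exact this hc
    have hcup : ∀ x, x ∈ A → x ∉ B → x ∈ K → c ∈ K := by
      intro x h1 h2 h3
      have := hS ((Formula.atom x).imp (Formula.atom c))
        (Or.inr (Or.inr (Or.inr (Or.inl ⟨x, ⟨h1, h2⟩, rfl⟩))))
      simp only [Sat] at this
      exact this h3
    have hBnc : ∀ y, y ∈ B → y ∉ A → y ∈ K → c ∉ K := by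
      intro y h1 h2 h3
      have := hS ((Formula.atom y).imp ((Formula.atom c).imp Formula.bot))
        (Or.inr (Or.inr (Or.inr (Or.inr (Or.inr (Or.inl ⟨y, ⟨h1, h2⟩, rfl⟩))))))
      simp only [Sat] at this
      exact this h3
    have hncB : ∀ y ∈ B, c ∉ K → y ∈ K := by
      intro y h1 h2
      have := hS (((Formula.atom c).imp Formula.bot).imp (Formula.atom y))
        (Or.inr (Or.inr (Or.inr (Or.inr (Or.inr (Or.inr ⟨y, h1, rfl⟩))))))
      simp only [Sat] at this
      exact this h2
    by_cases hcK : c ∈ K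
    · left
      have hKA : K = A := by
        apply subset_antisymm
        · intro x hx
          rcases hMAB x hx with h1 | h1
          · exact h1
          · by_cases h2 : x ∈ A
            · exact h2
            · exact absurd hcK (hBnc x h1 h2 hx)
        · intro x hx
          exact hAc x hx hcK
      exact ⟨hKA, hKA⟩
    · right
      have hKB : K = B := by
        apply subset_antisymm
        · intro x hx
          rcases hMAB x hx with h1 | h1
          · by_cases h2 : x ∈ B
            · exact h2
            · exact absurd (hcup x h1 h2 hx) hcK
          · exact h1
        · intro y hy
          exact hncB y hy hcK
      exact ⟨hKB, hKB⟩
  · intro hc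
    have key : ∀ (N : Set U), N = A ∨ N = B → SatTheory N (Ggen A B c) := by
      rintro N hN φ (⟨x, rfl⟩ | ⟨x, hx, rfl⟩ | ⟨x, hx, rfl⟩ | ⟨x, hx, rfl⟩ |
        ⟨x, hx, rfl⟩ | ⟨y, hy, rfl⟩ | ⟨y, hy, rfl⟩) <;>
        rcases hN with rfl | rfl <;> simp only [Sat] <;> tauto
    rcases hc with ⟨rfl, h2⟩ | ⟨rfl, h2⟩ <;> rw [h2] <;>
      exact satHTTheory_self.mpr (key _ (by tauto))

lemma AS_ctx_R1 (T : Set (Formula U)) (J : Set U) :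
    AS (T ∪ R1gen J) = {M | M = J ∧ SatTheory J T} := by
  ext M
  simp only [AS, Set.mem_setOf_eq, satHTTheory_union]
  constructor
  · rintro ⟨⟨hT, hR⟩, -⟩
    obtain ⟨-, rfl⟩ := (R1_char (subset_refl M)).mp hR
    exact ⟨rfl, satHTTheory_self.mp hT⟩
  · rintro ⟨rfl, hT⟩
    refine ⟨⟨satHTTheory_self.mpr hT, (R1_char (subset_refl M)).mpr ⟨rfl, rfl⟩⟩, ?_⟩
    intro K hK hKsat
    obtain ⟨h1, -⟩ := (R1_char hK.subset).mp hKsat.2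
    exact hK.ne h1

lemma AS_ctx_R2 (T : Set (Formula U)) {I J : Set U} {a : U}
    (hIJ : I ⊆ J) (haJ : a ∈ J) (haI : a ∉ I) :
    AS (T ∪ R2gen I J a) = {M | M = J ∧ SatTheory J T ∧ ¬ SatHTTheory I J T} := by
  have hIJ' : I ⊂ J := hIJ.ssubset_of_ne (fun h => haI (h ▸ haJ))
  ext M
  simp only [AS, Set.mem_setOf_eq, satHTTheory_union]
  constructor
  · rintro ⟨⟨hT, hR⟩, hmin⟩
    obtain ⟨rfl, -⟩ := (R2_char hIJ haJ haI (subset_refl M)).mp hR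
    refine ⟨rfl, satHTTheory_self.mp hT, fun hIT => hmin I hIJ' ⟨hIT, ?_⟩⟩
    exact (R2_char hIJ haJ haI hIJ'.subset).mpr ⟨rfl, Or.inl rfl⟩
  · rintro ⟨rfl, hT, hnT⟩
    refine ⟨⟨satHTTheory_self.mpr hT,
      (R2_char hIJ haJ haI (subset_refl M)).mpr ⟨rfl, Or.inr rfl⟩⟩, ?_⟩
    intro K hK hKsat
    obtain ⟨-, hKI | hKJ⟩ := (R2_char hIJ haJ haI hK.subset).mp hKsat.2
    · exact hnT (hKI ▸ hKsat.1)
    · exact hK.ne hKJ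

lemma AS_ctx_G (T : Set (Formula U)) {A B : Set U} {c : U} (hcA : c ∈ A) (hcB : c ∉ B) :
    AS (T ∪ Ggen A B c) = {M | (M = A ∨ M = B) ∧ SatTheory M T} := by
  ext M
  simp only [AS, Set.mem_setOf_eq, satHTTheory_union]
  constructor
  · rintro ⟨⟨hT, hG⟩, -⟩
    rcases (G_char hcA hcB (subset_refl M)).mp hG with ⟨-, rfl⟩ | ⟨-, rfl⟩
    · exact ⟨Or.inl rfl, satHTTheory_self.mp hT⟩
    · exact ⟨Or.inr rfl, satHTTheory_self.mp hT⟩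
  · rintro ⟨hM, hT⟩
    refine ⟨⟨satHTTheory_self.mpr hT, (G_char hcA hcB (subset_refl M)).mpr ?_⟩, ?_⟩
    · rcases hM with rfl | rfl
      · exact Or.inl ⟨rfl, rfl⟩
      · exact Or.inr ⟨rfl, rfl⟩
    · intro K hK hKsat
      rcases (G_char hcA hcB hK.subset).mp hKsat.2 with ⟨h1, h2⟩ | ⟨h1, h2⟩ <;>
        exact hK.ne (h1.trans h2.symm)

lemma geqv_symm {P Q : OptProblem U} (h : geqv Sem.aso P Q) : geqv Sem.aso Q P :=
  fun R hR => (h R hR).symm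

lemma HT_sub_of_geqv {P Q : OptProblem U} (h : geqv Sem.aso P Q) :
    HTmod P.gen ⊆ HTmod Q.gen := by
  rintro ⟨K, M⟩ ⟨hKM, hP⟩
  dsimp only at hKM hP
  refine ⟨hKM, ?_⟩
  show SatHTTheory K M Q.gen
  by_contra hQ
  by_cases hMQ : SatTheory M Q.gen
  · have hKne : K ≠ M := by
      intro h'
      subst h'
      exact hQ (satHTTheory_self.mpr hMQ)
    have hKMs : K ⊂ M := hKM.ssubset_of_ne hKne
    obtain ⟨a, haM, haK⟩ := Set.exists_of_ssubset hKMs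
    have heq := h (ctx (R2gen K M a)) rfl
    rw [pref_union_ctx, pref_union_ctx,
      AS_ctx_R2 P.gen hKM haM haK, AS_ctx_R2 Q.gen hKM haM haK] at heq
    have hm1 : M ∈ {I | I ∈ {M' | M' = M ∧ SatTheory M Q.gen ∧ ¬SatHTTheory K M Q.gen} ∧
        ¬ ∃ J ∈ {M' | M' = M ∧ SatTheory M Q.gen ∧ ¬SatHTTheory K M Q.gen},
          gtSel Q.sel J I} := by
      refine ⟨⟨rfl, hMQ, hQ⟩, ?_⟩
      rintro ⟨J, ⟨rfl, -, -⟩, hg⟩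
      exact gtSel_irrefl hg
    rw [← heq] at hm1
    obtain ⟨⟨-, -, hnP⟩, -⟩ := hm1
    exact hnP hP
  · have hMP : SatTheory M P.gen := satTheory_of_satHTTheory hKM hP
    have heq := h (ctx (R1gen M)) rfl
    rw [pref_union_ctx, pref_union_ctx, AS_ctx_R1 P.gen M, AS_ctx_R1 Q.gen M] at heq
    have hm1 : M ∈ {I | I ∈ {M' | M' = M ∧ SatTheory M P.gen} ∧
        ¬ ∃ J ∈ {M' | M' = M ∧ SatTheory M P.gen}, gtSel P.sel J I} := by
      refine ⟨⟨rfl, hMP⟩, ?_⟩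
      rintro ⟨J, ⟨rfl, -⟩, hg⟩
      exact gtSel_irrefl hg
    rw [heq] at hm1
    obtain ⟨⟨-, hQ'⟩, -⟩ := hm1
    exact hMQ hQ'

lemma gt_transfer {P Q : OptProblem U} (h : geqv Sem.aso P Q)
    (hmod : models P.gen = models Q.gen)
    {A B : Set U} (hA : A ∈ models P.gen) (hB : B ∈ models P.gen)
    (hPgt : gtSel P.sel A B) : gtSel Q.sel A B := by
  by_contra hQn
  have hAB : A ≠ B := fun he => gtSel_irrefl (he ▸ hPgt)
  have hBQ : SatTheory B Q.gen := by
    have : B ∈ models Q.gen := hmod ▸ hB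
    exact this
  have hAP : SatTheory A P.gen := hA
  obtain ⟨c, hc⟩ : ∃ c, (c ∈ A ∧ c ∉ B) ∨ (c ∈ B ∧ c ∉ A) := by
    by_contra hno
    push_neg at hno
    exact hAB (Set.ext fun x => ⟨(hno x).1, (hno x).2⟩)
  rcases hc with ⟨hcA, hcB⟩ | ⟨hcB, hcA⟩
  · have heq := h (ctx (Ggen A B c)) rfl
    rw [pref_union_ctx, pref_union_ctx,
      AS_ctx_G P.gen hcA hcB, AS_ctx_G Q.gen hcA hcB] at heq
    have hm1 : B ∈ {I | I ∈ {M | (M = A ∨ M = B) ∧ SatTheory M Q.gen} ∧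
        ¬ ∃ J ∈ {M | (M = A ∨ M = B) ∧ SatTheory M Q.gen}, gtSel Q.sel J I} := by
      refine ⟨⟨Or.inr rfl, hBQ⟩, ?_⟩
      rintro ⟨J, ⟨rfl | rfl, -⟩, hg⟩
      · exact hQn hg
      · exact gtSel_irrefl hg
    rw [← heq] at hm1
    exact hm1.2 ⟨A, ⟨Or.inl rfl, hAP⟩, hPgt⟩
  · have heq := h (ctx (Ggen B A c)) rfl
    rw [pref_union_ctx, pref_union_ctx,
      AS_ctx_G P.gen hcB hcA, AS_ctx_G Q.gen hcB hcA] at heq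
    have hm1 : B ∈ {I | I ∈ {M | (M = B ∨ M = A) ∧ SatTheory M Q.gen} ∧
        ¬ ∃ J ∈ {M | (M = B ∨ M = A) ∧ SatTheory M Q.gen}, gtSel Q.sel J I} := by
      refine ⟨⟨Or.inl rfl, hBQ⟩, ?_⟩
      rintro ⟨J, ⟨rfl | rfl, -⟩, hg⟩
      · exact gtSel_irrefl hg
      · exact hQn hg
    rw [← heq] at hm1
    exact hm1.2 ⟨A, ⟨Or.inr rfl, hAP⟩, hPgt⟩

end Stmt9Aux
lemma restrictRel_apply {rel : Set U → Set U → Prop} {V : Set (Set U)} {A B : Set U} :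
    restrictRel rel V A B ↔ rel A B ∧ A ∈ V ∧ B ∈ V := Iff.rfl

/-- Theorem 9, ASO case: `P ≡_g Q` iff `HT(P^g) = HT(Q^g)` and
`(>^P)_{Mod(P^g)} = (>^Q)_{Mod(Q^g)}`. -/
theorem stmt9 {U : Type} [Countable U] (P Q : OptProblem U) :
    geqv Sem.aso P Q ↔
      (HTmod P.gen = HTmod Q.gen ∧
       restrictRel (gtSel P.sel) (models P.gen) =
         restrictRel (gtSel Q.sel) (models Q.gen)) := by
  constructor
  · intro hg
    have hHT : HTmod P.gen = HTmod Q.gen :=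
      Set.Subset.antisymm (HT_sub_of_geqv hg) (HT_sub_of_geqv (geqv_symm hg))
    have hmod : models P.gen = models Q.gen := models_eq_of_HT hHT
    refine ⟨hHT, ?_⟩
    funext A B
    apply propext
    rw [restrictRel_apply, restrictRel_apply]
    constructor
    · rintro ⟨hgP, hA, hB⟩
      exact ⟨gt_transfer hg hmod hA hB hgP, hmod ▸ hA, hmod ▸ hB⟩
    · rintro ⟨hgQ, hA, hB⟩
      have hA' : A ∈ models P.gen := hmod.symm ▸ hA
      have hB' : B ∈ models P.gen := hmod.symm ▸ hB
      exact ⟨gt_transfer (geqv_symm hg) hmod.symm hA hB hgQ, hA', hB'⟩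
  · rintro ⟨hHT, hgt⟩ R hRsel
    have hAS : AS (P.gen ∪ R.gen) = AS (Q.gen ∪ R.gen) := AS_union_eq hHT R.gen
    have hmod : models P.gen = models Q.gen := models_eq_of_HT hHT
    have hgt' : ∀ A B : Set U, A ∈ models P.gen → B ∈ models P.gen →
        (gtSel P.sel A B ↔ gtSel Q.sel A B) := by
      intro A B hA hB
      have hiff : (gtSel P.sel A B ∧ A ∈ models P.gen ∧ B ∈ models P.gen) ↔
          (gtSel Q.sel A B ∧ A ∈ models Q.gen ∧ B ∈ models Q.gen) :=
        Iff.of_eq (congrFun (congrFun hgt A) B)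
      constructor
      · intro hgp
        exact (hiff.mp ⟨hgp, hA, hB⟩).1
      · intro hgq
        exact (hiff.mpr ⟨hgq, hmod ▸ hA, hmod ▸ hB⟩).1
    have hsub : AS (Q.gen ∪ R.gen) ⊆ models P.gen := by
      intro M hM
      have h1 : SatTheory M (Q.gen ∪ R.gen) := satHTTheory_self.mp hM.1
      have h2 : SatTheory M Q.gen := fun φ hφ => h1 φ (Or.inl hφ)
      rw [hmod]
      exact h2
    ext I
    simp only [pref, outcomes, OptProblem.union, Set.mem_setOf_eq, hRsel, Set.union_empty]
    rw [hAS]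
    constructor
    · rintro ⟨hI, hnb⟩
      refine ⟨hI, ?_⟩
      rintro ⟨J, hJ, hgJ⟩
      exact hnb ⟨J, hJ, (hgt' J I (hsub hJ) (hsub hI)).mpr hgJ⟩
    · rintro ⟨hI, hnb⟩
      refine ⟨hI, ?_⟩
      rintro ⟨J, hJ, hgJ⟩
      exact hnb ⟨J, hJ, (hgt' J I (hsub hJ) (hsub hI)).mp hgJ⟩
end
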